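/- In the single-minded combinatorial auction setting, where M is a finite ground set of items, 𝒪ᵢ = 2^M, and 𝒱ᵢ is the set of all single-minded valuations v_{S,x} (for S ⊆ M and x ∈ ℝ≥0, v_{S,x}(T) = x if S ⊆ T and v_{S,x}(T) = 0 otherwise), the pair (𝒱ᵢ, 𝒪ᵢ) has the upper semilattice property. -/
import Mathlib


/-!
Statement 5: In the single-minded combinatorial auction setting, the pair
(𝒱ᵢ, 𝒪ᵢ) has the upper semilattice property.
-/

/-- The upper semilattice property of a pair (𝒱ᵢ, 𝒪ᵢ). -/
def UpperSemilatticeProperty {Oi : Type*} (Vi : Set (Oi → ℝ)) : Prop :=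
  ∀ oi : Oi, ∀ vi ∈ Vi, ∀ vi' ∈ Vi, ∃ vi'' ∈ Vi, ∀ oi' : Oi,
    vi'' oi - vi'' oi' ≥ max (vi oi - vi oi') (vi' oi - vi' oi')

/-- The set of single-minded valuations over a finite ground set `M` of items:
`v_{S,x}(T) = x` if `S ⊆ T` and `0` otherwise, for `S ⊆ M` and `x ≥ 0`. -/
def SingleMindedValuations (M : Type*) [Fintype M] [DecidableEq M] :
    Set (Finset M → ℝ) :=
  {v | ∃ (S : Finset M) (x : ℝ), 0 ≤ x ∧ v = fun T => if S ⊆ T then x else 0}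

/-- The single-minded valuation space has the upper semilattice property. -/
theorem singleMinded_upperSemilattice (M : Type*) [Fintype M] [DecidableEq M] :
    UpperSemilatticeProperty (SingleMindedValuations M) := by
  rintro T₀ vi ⟨S, x, hx, rfl⟩ vi' ⟨S', x', hx', rfl⟩
  set A : Finset M := if S ⊆ T₀ then S else ∅ with hA
  set B : Finset M := if S' ⊆ T₀ then S' else ∅ with hB
  set a : ℝ := if S ⊆ T₀ then x else 0 with ha
  set b : ℝ := if S' ⊆ T₀ then x' else 0 with hb
  have ha0 : 0 ≤ a := by rw [ha]; split <;> simp [hx]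
  have hb0 : 0 ≤ b := by rw [hb]; split <;> simp [hx']
  refine ⟨fun T => if A ∪ B ⊆ T then a + b else 0,
    ⟨A ∪ B, a + b, by positivity, rfl⟩, fun T' => ?_⟩
  have hAT₀ : A ⊆ T₀ := by rw [hA]; split <;> simp [*]
  have hBT₀ : B ⊆ T₀ := by rw [hB]; split <;> simp [*]
  have hUT₀ : A ∪ B ⊆ T₀ := Finset.union_subset hAT₀ hBT₀
  simp only [hUT₀, if_true]
  -- value of vi at T₀ is a, of vi' at T₀ is b
  have h1 : (if S ⊆ T₀ then x else 0) = a := rfl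
  have h2 : (if S' ⊆ T₀ then x' else 0) = b := rfl
  rw [h1, h2, ge_iff_le, max_le_iff]
  by_cases hU : A ∪ B ⊆ T'
  · simp only [hU, if_true, sub_self]
    constructor
    · rw [ha]
      split
      · have : S ⊆ T' := le_trans (by rw [hA]; simp [*]) hU
        simp [this]
      · split <;> simp [hx]
    · rw [hb]
      split
      · have : S' ⊆ T' := le_trans (by rw [hB]; simp [*]) hU
        simp [this]
      · split <;> simp [hx']
  · simp only [hU, if_false, sub_zero]
    constructor
    · have : (0:ℝ) ≤ if S ⊆ T' then x else 0 := by split <;> simp [hx]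
      nlinarith
    · have : (0:ℝ) ≤ if S' ⊆ T' then x' else 0 := by split <;> simp [hx']
      nlinarith
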